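/- Let k be a non-negative integer, P a finite propositional logic program, and M a stable model of P with |M| ≤ k. Then the set of atoms U_M is a model of the theory T₀(P). -/

import Mathlib

open scoped Classical

noncomputable section

/-- A propositional logic program rule: a head atom, a finite positive body and a
finite negative body. -/
structure LPRule (α : Type) where
  head : α
  pos : Finset α
  neg : Finset α
deriving DecidableEq

/-- A logic program is a finite set of rules. -/
abbrev LProgram (α : Type) := Finset (LPRule α)

variable {α : Type} [DecidableEq α]

/-- `horn r`: the Horn rule with the same head and positive body as `r`
and empty negative body. -/
def LPRule.horn (r : LPRule α) : LPRule α := ⟨r.head, r.pos, ∅⟩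

/-- A rule `r` is proper if `h(r) ∉ b⁺(r)` and `b⁺(r) ∩ b⁻(r) = ∅`. -/
def LPRule.proper (r : LPRule α) : Prop := r.head ∉ r.pos ∧ r.pos ∩ r.neg = ∅

/-- `At(P)`: the set of atoms occurring in `P`. -/
def atomsP (P : LProgram α) : Finset α := P.sup (fun r => insert r.head (r.pos ∪ r.neg))

/-- `h(P)`: the set of heads of rules of `P`. -/
def headsP (P : LProgram α) : Finset α := P.image LPRule.head

/-- `Neg(P)`: the set of atoms occurring negated in `P`. -/
def negP (P : LProgram α) : Finset α := P.sup LPRule.neg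

/-- The least model of a (Horn) program `Q`, given as a set of rules (negative bodies
are ignored; Horn rules have empty negative bodies): the least set `M` of atoms such
that `h(r) ∈ M` whenever `r ∈ Q` and `b⁺(r) ⊆ M`. -/
def LM (Q : Set (LPRule α)) : Set α :=
  ⋂₀ {M : Set α | ∀ r ∈ Q, (↑r.pos : Set α) ⊆ M → r.head ∈ M}

/-- The reduct `P^S`: delete every rule whose negative body meets `S` and remove the
negative bodies of the remaining rules. -/
def reduct (P : LProgram α) (S : Set α) : Set (LPRule α) :=
  LPRule.horn '' {r | r ∈ P ∧ (↑r.neg : Set α) ∩ S = ∅}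

/-- `M` is a stable model of `P` if `M = LM (P^M)`. -/
def isStable (P : LProgram α) (M : Set α) : Prop :=
  M = LM (reduct P M)

/-- The propositional atoms of the encoding `T(P)`: for each program atom `q`,
atoms `c(q)`, `c(q,i)`, `c⁻(q,i)` and `d(q,i)`. -/
inductive EncAtom (α : Type) where
  | c : α → EncAtom α
  | ci : α → ℕ → EncAtom α
  | cm : α → ℕ → EncAtom α
  | d : α → ℕ → EncAtom α
deriving DecidableEq

/-- `U` satisfies `F₁(q,i) = c⁻(q,i) ↔ (c(q,1) ∨ … ∨ c(q,i-1))`. -/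
def SatF1 (U : Set (EncAtom α)) (q : α) (i : ℕ) : Prop :=
  EncAtom.cm q i ∈ U ↔ ∃ j, 1 ≤ j ∧ j ≤ i - 1 ∧ EncAtom.ci q j ∈ U

/-- `U` satisfies `F₂(q) = c(q) ↔ (c(q,1) ∨ … ∨ c(q,k+1))`. -/
def SatF2 (k : ℕ) (U : Set (EncAtom α)) (q : α) : Prop :=
  EncAtom.c q ∈ U ↔ ∃ j, 1 ≤ j ∧ j ≤ k + 1 ∧ EncAtom.ci q j ∈ U

/-- `U` satisfies `F₃(r,i)`; for `i ≥ 2` this is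
`c⁻(a₁,i) ∧ … ∧ c⁻(a_s,i) ∧ ¬c(b₁) ∧ … ∧ ¬c(b_t) ∧ ¬c⁻(q,i)`, for `i = 1` it is
`false` when `b⁺(r) ≠ ∅` and `¬c(b₁) ∧ … ∧ ¬c(b_t)` when `b⁺(r) = ∅`. -/
def SatF3 (U : Set (EncAtom α)) (r : LPRule α) (i : ℕ) : Prop :=
  if i = 1 then r.pos = ∅ ∧ ∀ b ∈ r.neg, EncAtom.c b ∉ U
  else (∀ a ∈ r.pos, EncAtom.cm a i ∈ U) ∧ (∀ b ∈ r.neg, EncAtom.c b ∉ U) ∧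
    EncAtom.cm r.head i ∉ U

/-- `U` satisfies `F₄(q,i) = c(q,i) ↔ (F₃(r₁,i) ∨ … ∨ F₃(r_v,i))`, where
`r₁,…,r_v` are all rules of `P` with head `q`. -/
def SatF4 (P : LProgram α) (U : Set (EncAtom α)) (q : α) (i : ℕ) : Prop :=
  EncAtom.ci q i ∈ U ↔ ∃ r ∈ P, r.head = q ∧ SatF3 U r i

/-- `U` is a model of the theory `T₀(P)`. -/
def ModelT0 (k : ℕ) (P : LProgram α) (U : Set (EncAtom α)) : Prop :=
  (∀ q ∈ atomsP P, ∀ i, 2 ≤ i → i ≤ k + 1 → SatF1 U q i) ∧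
  (∀ q ∈ atomsP P, SatF2 k U q) ∧
  (∀ q ∈ atomsP P, ∀ i, 1 ≤ i → i ≤ k + 1 → SatF4 P U q i)

/-- `M(U) = {q ∈ At(P) : c(q) ∈ U}`. -/
def MU (P : LProgram α) (U : Set (EncAtom α)) : Finset α :=
  (atomsP P).filter (fun q => EncAtom.c q ∈ U)

/-- The van Emden–Kowalski operator `T_Q` of a (Horn) program `Q`
(negative bodies are ignored). -/
def TPstep (Q : Set (LPRule α)) (M : Set α) : Set α :=
  {a | ∃ r ∈ Q, r.head = a ∧ (↑r.pos : Set α) ⊆ M}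

/-- Iterations `T_Q^i(∅)` of the van Emden–Kowalski operator. -/
def TPiter (Q : Set (LPRule α)) : ℕ → Set α
  | 0 => ∅
  | n + 1 => TPstep Q (TPiter Q n)
/-!
Let `Q = P^M` and call the least `s` with `q ∈ T_Q^s(∅)` the stage of `q ∈ M`; stability gives
`T_Q^n(∅) ⊆ M` for all `n`, so `q ∈ T_Q^n(∅)` iff `q ∈ M` and its stage is at most `n`. Before
the stage of any atom is reached the iteration cannot have become stationary, so it grows
strictly at each step inside `M`, and stages are at most `|M| ≤ k`. In `U_M` the atom `c⁻(a,i)`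
says "`a ∈ T_Q^{i-1}(∅)`", so `F₃(r,i)` says that `r` belongs to `P^M`, fires on
`T_Q^{i-1}(∅)` and has a head not yet derived; hence `F₄(q,i)` says that `q` has stage `i`.
-/

section

omit [DecidableEq α]

lemma TPstep_mono (Q : Set (LPRule α)) {A B : Set α} (h : A ⊆ B) :
    TPstep Q A ⊆ TPstep Q B := by
  rintro x ⟨r, hr, hh, hp⟩
  exact ⟨r, hr, hh, hp.trans h⟩

lemma TPiter_succ_mono (Q : Set (LPRule α)) : ∀ n, TPiter Q n ⊆ TPiter Q (n + 1)
  | 0 => Set.empty_subset _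
  | n + 1 => TPstep_mono Q (TPiter_succ_mono Q n)

lemma TPiter_monotone (Q : Set (LPRule α)) : Monotone (TPiter Q) :=
  monotone_nat_of_le_succ (TPiter_succ_mono Q)

lemma ne_zero_of_mem_TPiter {Q : Set (LPRule α)} {a : α} {n : ℕ} (h : a ∈ TPiter Q n) :
    n ≠ 0 := by
  rintro rfl
  exact h

lemma TPiter_subset_LM (Q : Set (LPRule α)) : ∀ n, TPiter Q n ⊆ LM Q
  | 0 => Set.empty_subset _
  | n + 1 => by
    rintro x ⟨r, hr, rfl, hp⟩
    refine Set.mem_sInter.2 fun N hN => hN r hr (hp.trans ?_)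
    exact (TPiter_subset_LM Q n).trans (Set.sInter_subset_of_mem hN)

lemma TPiter_eq_of_succ_eq (Q : Set (LPRule α)) {n : ℕ} (h : TPiter Q (n + 1) = TPiter Q n) :
    ∀ m, n ≤ m → TPiter Q m = TPiter Q n := by
  intro m hm
  induction hm with
  | refl => rfl
  | step _ ih =>
    change TPstep Q (TPiter Q _) = TPiter Q n
    rw [ih]
    exact h

lemma le_ncard_TPiter_of_forall_notMem {Q : Set (LPRule α)} {q : α} {n : ℕ}
    (hfin : (TPiter Q n).Finite) (hq : q ∈ TPiter Q n) (hmin : ∀ s < n, q ∉ TPiter Q s) :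
    n ≤ (TPiter Q n).ncard := by
  suffices ∀ m ≤ n, m ≤ (TPiter Q m).ncard from this n le_rfl
  intro m
  induction m with
  | zero => exact fun _ => Nat.zero_le _
  | succ m ih =>
    intro hm
    have hstrict : TPiter Q m ⊂ TPiter Q (m + 1) := by
      refine (TPiter_succ_mono Q m).ssubset_of_ne fun heq => hmin m (by omega) ?_
      rwa [← TPiter_eq_of_succ_eq Q heq.symm n (by omega)]
    have := Set.ncard_lt_ncard hstrict (hfin.subset (TPiter_monotone Q hm))
    have := ih (by omega)
    omega

lemma mem_TPiter_reduct_succ {P : LProgram α} {S : Set α} {a : α} {n : ℕ} :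
    a ∈ TPiter (reduct P S) (n + 1) ↔ ∃ r ∈ P, r.head = a ∧ (↑r.neg : Set α) ∩ S = ∅ ∧
      (↑r.pos : Set α) ⊆ TPiter (reduct P S) n := by
  constructor
  · rintro ⟨_, ⟨r, ⟨hr, hneg⟩, rfl⟩, hhead, hpos⟩
    exact ⟨r, hr, hhead, hneg, hpos⟩
  · rintro ⟨r, hr, hhead, hneg, hpos⟩
    exact ⟨r.horn, ⟨r, ⟨hr, hneg⟩, rfl⟩, hhead, hpos⟩

lemma mem_TPiter_iff {Q : Set (LPRule α)} {M : Finset α} {sq : α → ℕ}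
    (hQM : ∀ n, TPiter Q n ⊆ ↑M)
    (hsq : ∀ q ∈ M, q ∈ TPiter Q (sq q) ∧ ∀ s < sq q, q ∉ TPiter Q s) {a : α} {n : ℕ} :
    a ∈ TPiter Q n ↔ a ∈ M ∧ sq a ≤ n := by
  constructor
  · intro ha
    have haM : a ∈ M := hQM n ha
    exact ⟨haM, le_of_not_gt fun hlt => (hsq a haM).2 n hlt ha⟩
  · rintro ⟨haM, hle⟩
    exact TPiter_monotone Q hle (hsq a haM).1

def UM (k : ℕ) (M : Finset α) (sq : α → ℕ) : Set (EncAtom α) :=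
  {x | (∃ q ∈ M, x = EncAtom.c q) ∨ (∃ q ∈ M, x = EncAtom.ci q (sq q)) ∨
    (∃ q ∈ M, ∃ i, sq q < i ∧ i ≤ k + 1 ∧ x = EncAtom.cm q i)}

section UM

variable {k : ℕ} {M : Finset α} {sq : α → ℕ}

@[simp]
lemma c_mem_UM {q : α} : EncAtom.c q ∈ UM k M sq ↔ q ∈ M := by
  simp [UM]

@[simp]
lemma ci_mem_UM {q : α} {j : ℕ} : EncAtom.ci q j ∈ UM k M sq ↔ q ∈ M ∧ j = sq q := by
  simp [UM]

@[simp]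
lemma cm_mem_UM {q : α} {i : ℕ} :
    EncAtom.cm q i ∈ UM k M sq ↔ q ∈ M ∧ sq q < i ∧ i ≤ k + 1 := by
  simp [UM]

lemma satF1_UM (hsq : ∀ q ∈ M, 1 ≤ sq q) (q : α) {i : ℕ} (hik : i ≤ k + 1) :
    SatF1 (UM k M sq) q i := by
  simp only [SatF1, cm_mem_UM, ci_mem_UM]
  constructor
  · rintro ⟨hq, hlt, -⟩
    exact ⟨sq q, hsq q hq, by omega, hq, rfl⟩
  · rintro ⟨j, hj1, hji, hq, rfl⟩
    exact ⟨hq, by omega, hik⟩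

lemma satF2_UM (hsq : ∀ q ∈ M, 1 ≤ sq q ∧ sq q ≤ k + 1) (q : α) :
    SatF2 k (UM k M sq) q := by
  simp only [SatF2, c_mem_UM, ci_mem_UM]
  exact ⟨fun hq => ⟨sq q, (hsq q hq).1, (hsq q hq).2, hq, rfl⟩, fun ⟨_, _, _, hq, _⟩ => hq⟩

variable {P : LProgram α}

lemma satF3_UM_iff (hstage : ∀ a n, a ∈ TPiter (reduct P ↑M) n ↔ a ∈ M ∧ sq a ≤ n)
    {r : LPRule α} {i : ℕ} (hi : 1 ≤ i) (hik : i ≤ k + 1) :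
    SatF3 (UM k M sq) r i ↔ (↑r.neg : Set α) ∩ ↑M = ∅ ∧
      (↑r.pos : Set α) ⊆ TPiter (reduct P ↑M) (i - 1) ∧ r.head ∉ TPiter (reduct P ↑M) (i - 1) := by
  have hneg : (∀ b ∈ r.neg, EncAtom.c b ∉ UM k M sq) ↔ (↑r.neg : Set α) ∩ ↑M = ∅ := by
    simp [Set.eq_empty_iff_forall_notMem]
  have hcm : ∀ a, EncAtom.cm a i ∈ UM k M sq ↔ a ∈ TPiter (reduct P ↑M) (i - 1) := by
    intro a
    rw [cm_mem_UM, hstage]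
    grind
  unfold SatF3
  split_ifs with h1
  · subst h1
    rw [← hneg]
    simp [TPiter, and_comm]
  · simp only [hcm, hneg, Set.subset_def, Finset.mem_coe]
    tauto

lemma satF4_UM (hstage : ∀ a n, a ∈ TPiter (reduct P ↑M) n ↔ a ∈ M ∧ sq a ≤ n)
    (q : α) {i : ℕ} (hi : 1 ≤ i) (hik : i ≤ k + 1) : SatF4 P (UM k M sq) q i := by
  obtain ⟨n, rfl⟩ : ∃ n, i = n + 1 := ⟨i - 1, by omega⟩
  have hci : EncAtom.ci q (n + 1) ∈ UM k M sq ↔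
      q ∈ TPiter (reduct P ↑M) (n + 1) ∧ q ∉ TPiter (reduct P ↑M) n := by
    rw [ci_mem_UM, hstage, hstage]
    grind
  rw [SatF4, hci, mem_TPiter_reduct_succ]
  simp only [satF3_UM_iff hstage hi hik, Nat.add_sub_cancel]
  constructor
  · rintro ⟨⟨r, hr, rfl, hneg, hpos⟩, hq⟩
    exact ⟨r, hr, rfl, hneg, hpos, hq⟩
  · rintro ⟨r, hr, rfl, hneg, hpos, hq⟩
    exact ⟨⟨r, hr, rfl, hneg, hpos⟩, hq⟩

end UM

end

theorem UM_model_general (k : ℕ) (P : LProgram α) (M : Finset α)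
    (hstable : isStable P ↑M) (hcard : M.card ≤ k)
    (sq : α → ℕ)
    (hsq : ∀ q ∈ M, q ∈ TPiter (reduct P ↑M) (sq q) ∧
      ∀ s < sq q, q ∉ TPiter (reduct P ↑M) s) :
    ModelT0 k P
      {x | (∃ q ∈ M, x = EncAtom.c q) ∨ (∃ q ∈ M, x = EncAtom.ci q (sq q)) ∨
        (∃ q ∈ M, ∃ i, sq q < i ∧ i ≤ k + 1 ∧ x = EncAtom.cm q i)} := by
  have hQM : ∀ n, TPiter (reduct P ↑M) n ⊆ ↑M :=
    fun n => (TPiter_subset_LM _ n).trans hstable.ge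
  have hpos : ∀ q ∈ M, 1 ≤ sq q :=
    fun q hq => Nat.one_le_iff_ne_zero.2 (ne_zero_of_mem_TPiter (hsq q hq).1)
  have hle : ∀ q ∈ M, sq q ≤ k := fun q hq =>
    calc sq q ≤ (TPiter (reduct P ↑M) (sq q)).ncard :=
          le_ncard_TPiter_of_forall_notMem ((M.finite_toSet).subset (hQM _)) (hsq q hq).1
            (hsq q hq).2
      _ ≤ (↑M : Set α).ncard := Set.ncard_le_ncard (hQM _)
      _ = M.card := Set.ncard_coe_finset M
      _ ≤ k := hcard
  exact ⟨fun q _ i _ hik => satF1_UM hpos q hik,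
    fun q _ => satF2_UM (fun q hq => ⟨hpos q hq, (hle q hq).trans k.le_succ⟩) q,
    fun q _ i hi hik => satF4_UM (fun a n => mem_TPiter_iff hQM hsq) q hi hik⟩

/-- let `M` be a stable model of `P` with `|M| ≤ k` and, for `q ∈ M`, let
`sq q` be the least `s` with `q ∈ T_{P^M}^s(∅)`.  Then
`U_M = {c(q), c(q,sq q) : q ∈ M} ∪ {c⁻(q,i) : q ∈ M, sq q < i ≤ k+1}`
is a model of `T₀(P)`. -/
theorem UM_model (k : ℕ) (P : LProgram α) (M : Finset α)
    (hMA : (↑M : Set α) ⊆ ↑(atomsP P))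
    (hstable : isStable P ↑M) (hcard : M.card ≤ k)
    (sq : α → ℕ)
    (hsq : ∀ q ∈ M, q ∈ TPiter (reduct P ↑M) (sq q) ∧
      ∀ s < sq q, q ∉ TPiter (reduct P ↑M) s) :
    ModelT0 k P
      {x | (∃ q ∈ M, x = EncAtom.c q) ∨ (∃ q ∈ M, x = EncAtom.ci q (sq q)) ∨
        (∃ q ∈ M, ∃ i, sq q < i ∧ i ≤ k + 1 ∧ x = EncAtom.cm q i)} :=
  UM_model_general k P M hstable hcard sq hsq
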